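/- Suppose n > m + 2γ for some positive integer m, γ ∈ (0,1), and W : ℝ₊^{n+1} → ℝ satisfies the decay |∇W(x)| ≤ C |x|^{−(n−2γ+1)} for |x| ≥ 1 together with |∇W| bounded on bounded sets. Then for the rescaled family W_ε(x) = ε^{−(n−2γ)/2} W(x/ε) and any fixed η > 0, one has ∫_{B⁺(0,η)} x_{n+1}^{1−2γ} |x|^{m+1} |∇W_ε(x)|² dx = o(ε^m) as ε → 0⁺. -/

import Mathlib

/-!
Split at `|x| = ε`. Inside, `∇W` is bounded; outside, its decay rate `n - 2γ + 1` may be weakened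
to any `b ≤ n - 2γ + 1`. With `b = (m + δ + n - 2γ + 2) / 2`, `0 < δ < min 1 (n - 2γ - m)`, both
regions give, for every `ε > 0`, the pointwise bound
`integrand ≤ K² ε^(m+δ) x_{n+1}^(1-2γ) |x|^(-(n - 2γ + 1 + δ))`.
The right-hand side is integrable on `B⁺(0,η)`: `1 - 2γ > -1`, and its homogeneity `-n - δ`
exceeds `-(n + 1)`. To see this without polar coordinates, the weighted AM-GM inequality
`|x|^q ≤ ∏ |x_i|^(θ_i q)` dominates it by a product of integrable one-dimensional powers.
So the integral is `O(ε^(m+δ)) = o(ε^m)`.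
-/

open MeasureTheory Set Filter Asymptotics Topology

theorem intervalIntegrable_abs_rpow {c : ℝ} (hc : -1 < c) (a b : ℝ) :
    IntervalIntegrable (fun t : ℝ => |t| ^ c) volume a b := by
  have hpos : ∀ b, 0 ≤ b → IntervalIntegrable (fun t : ℝ => |t| ^ c) volume 0 b := fun b hb =>
    (intervalIntegral.intervalIntegrable_rpow' hc).congr fun t ht => by
      rw [uIoc_of_le hb] at ht
      simp only [abs_of_pos ht.1]
  have h0 : ∀ b, IntervalIntegrable (fun t : ℝ => |t| ^ c) volume 0 b := by
    intro b
    rcases le_total 0 b with hb | hb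
    · exact hpos b hb
    · rw [IntervalIntegrable.iff_comp_neg]
      simpa using hpos (-b) (by linarith)
  exact (h0 a).symm.trans (h0 b)

theorem integrableOn_ball_prod_abs_rpow {ι : Type*} [Fintype ι] {c : ι → ℝ}
    (hc : ∀ i, -1 < c i) (η : ℝ) :
    IntegrableOn (fun x : EuclideanSpace ℝ ι => ∏ i, |x i| ^ c i) (Metric.ball 0 η) := by
  let ψ : ι → ℝ → ℝ := fun i => (Ioc (-|η|) |η|).indicator fun t => |t| ^ c i
  have hψ : ∀ i, Integrable (ψ i) := fun i =>
    (integrable_indicator_iff measurableSet_Ioc).2 <|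
      (intervalIntegrable_iff_integrableOn_Ioc_of_le (neg_le_self (abs_nonneg η))).1
        (intervalIntegrable_abs_rpow (hc i) _ _)
  have hprod : Integrable fun x : EuclideanSpace ℝ ι => ∏ i, ψ i (x i) :=
    ((PiLp.volume_preserving_ofLp ι).integrable_comp_emb
      (MeasurableEquiv.toLp 2 (ι → ℝ)).symm.measurableEmbedding).2 (Integrable.fintype_prod hψ)
  refine hprod.integrableOn.congr_fun (fun x hx => ?_) measurableSet_ball
  refine Finset.prod_congr rfl fun i _ => indicator_of_mem ?_ _
  have hxi : |x i| < |η| :=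
    ((PiLp.norm_apply_le x i).trans_lt (mem_ball_zero_iff.1 hx)).trans_le (le_abs_self η)
  exact ⟨(abs_lt.1 hxi).1, (abs_lt.1 hxi).2.le⟩

theorem ae_forall_coord_ne_zero (ι : Type*) [Fintype ι] :
    ∀ᵐ x : EuclideanSpace ℝ ι, ∀ i, x i ≠ 0 :=
  (PiLp.volume_preserving_ofLp ι).quasiMeasurePreserving.ae
    (ae_all_iff.2 fun i => Measure.ae_eval_ne _ i 0)

theorem EuclideanSpace.norm_rpow_le_prod_abs_rpow {ι : Type*} [Fintype ι] {θ : ι → ℝ}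
    (hθ0 : ∀ i, 0 ≤ θ i) (hθ : ∑ i, θ i = 1) {q : ℝ} (hq : q ≤ 0)
    {x : EuclideanSpace ℝ ι} (hx : ∀ i, x i ≠ 0) :
    ‖x‖ ^ q ≤ ∏ i, |x i| ^ (θ i * q) := by
  have hgm : ∏ i, (|x i| ^ 2) ^ θ i ≤ ‖x‖ ^ 2 := by
    rw [EuclideanSpace.norm_sq_eq]
    calc ∏ i, (|x i| ^ 2) ^ θ i ≤ ∑ i, θ i * |x i| ^ 2 :=
          Real.geom_mean_le_arith_mean_weighted _ _ _ (fun i _ => hθ0 i) hθ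
            fun i _ => sq_nonneg _
      _ ≤ ∑ i, ‖x i‖ ^ 2 := Finset.sum_le_sum fun i _ =>
          mul_le_of_le_one_left (sq_nonneg _)
            (hθ ▸ Finset.single_le_sum (fun j _ => hθ0 j) (Finset.mem_univ i))
  have hpos : 0 < ∏ i, (|x i| ^ 2) ^ θ i :=
    Finset.prod_pos fun i _ => Real.rpow_pos_of_pos (by positivity [hx i]) _
  calc ‖x‖ ^ q = (‖x‖ ^ 2) ^ (q / 2) := by
        rw [← Real.rpow_natCast, ← Real.rpow_mul (norm_nonneg _)]
        ring_nf
    _ ≤ (∏ i, (|x i| ^ 2) ^ θ i) ^ (q / 2) := Real.rpow_le_rpow_of_nonpos hpos hgm (by linarith)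
    _ = ∏ i, |x i| ^ (θ i * q) := by
        rw [← Real.finsetProd_rpow _ _ fun i _ => by positivity]
        refine Finset.prod_congr rfl fun i _ => ?_
        rw [← Real.rpow_natCast, ← Real.rpow_mul (abs_nonneg _), ← Real.rpow_mul (abs_nonneg _)]
        ring_nf

theorem integrableOn_coord_rpow_mul_norm_rpow_of_weights {ι : Type*} [Fintype ι] [DecidableEq ι]
    (l : ι) {A q : ℝ} (hq : q ≤ 0) (θ : ι → ℝ) (hθ0 : ∀ i, 0 ≤ θ i) (hθ : ∑ i, θ i = 1)
    (hc : ∀ i, -1 < θ i * q + if i = l then A else 0) (η : ℝ) :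
    IntegrableOn (fun x : EuclideanSpace ℝ ι => x l ^ A * ‖x‖ ^ q)
      ({x | 0 < x l} ∩ Metric.ball 0 η) := by
  have hmeas : MeasurableSet {x : EuclideanSpace ℝ ι | 0 < x l} :=
    measurableSet_lt measurable_const (by fun_prop)
  refine ((integrableOn_ball_prod_abs_rpow hc η).mono_set inter_subset_right).mono'
    (by fun_prop) ?_
  filter_upwards [ae_restrict_mem (hmeas.inter measurableSet_ball),
    ae_restrict_of_ae (ae_forall_coord_ne_zero ι)] with x hxS hx0
  have hxl : 0 < x l := hxS.1
  have hsplit : ∏ i, |x i| ^ (θ i * q + if i = l then A else 0)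
      = x l ^ A * ∏ i, |x i| ^ (θ i * q) := by
    have hA : ∏ i, |x i| ^ (if i = l then A else 0) = x l ^ A := by
      rw [Finset.prod_eq_single l (fun i _ hi => by rw [if_neg hi, Real.rpow_zero]) (by simp),
        if_pos rfl, abs_of_pos hxl]
    simp_rw [Real.rpow_add (abs_pos.2 (hx0 _)), Finset.prod_mul_distrib, hA, mul_comm]
  rw [hsplit, Real.norm_eq_abs, abs_of_nonneg (by positivity)]
  exact mul_le_mul_of_nonneg_left (EuclideanSpace.norm_rpow_le_prod_abs_rpow hθ0 hθ hq hx0)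
    (by positivity)

theorem integrableOn_coord_rpow_mul_norm_rpow {ι : Type*} [Fintype ι] (hι : 1 < Fintype.card ι)
    (l : ι) {A q : ℝ} (hA : -1 < A) (hq : q < 0) (hAq : -(Fintype.card ι : ℝ) < A + q) (η : ℝ) :
    IntegrableOn (fun x : EuclideanSpace ℝ ι => x l ^ A * ‖x‖ ^ q)
      ({x | 0 < x l} ∩ Metric.ball 0 η) := by
  classical
  set N : ℝ := Fintype.card ι - 1 with hN_def
  have hN : 0 < N := by
    have : (1 : ℝ) < Fintype.card ι := by exact_mod_cast hι
    linarith
  obtain ⟨u, hu0, hu1⟩ : ∃ u, max 0 (-q - N) < u ∧ u < min (A + 1) (-q) :=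
    exists_between <|
      max_lt (lt_min (by linarith) (by linarith)) (lt_min (by linarith) (by linarith))
  rw [max_lt_iff] at hu0
  rw [lt_min_iff] at hu1
  -- `θ l = u / -q` leaves the exponent `A - u` on `x l` and `(q + u) / N` on each other coordinate.
  set t := u / -q with ht_def
  have ht0 : 0 ≤ t := div_nonneg hu0.1.le (by linarith)
  have ht1 : t ≤ 1 := (div_le_one (by linarith)).2 hu1.2.le
  have htq : t * q = -u := by rw [ht_def]; field_simp [hq.ne]
  refine integrableOn_coord_rpow_mul_norm_rpow_of_weights l hq.le
    (fun i => if i = l then t else (1 - t) / N) (fun i => ?_) ?_ (fun i => ?_) η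
  · split_ifs
    · exact ht0
    · exact div_nonneg (by linarith) hN.le
  · rw [Fintype.sum_eq_add_sum_compl l, if_pos rfl,
      Finset.sum_congr rfl fun i hi => if_neg (by simpa using hi),
      Finset.sum_const, Finset.card_compl, Finset.card_singleton, nsmul_eq_mul,
      Nat.cast_sub hι.le, Nat.cast_one, ← hN_def]
    field_simp
    ring
  · split_ifs with hi
    · linarith
    · rw [add_zero, div_mul_eq_mul_div, sub_mul, one_mul, htq, lt_div_iff₀ hN]
      linarith

theorem exists_le_mul_norm_rpow_neg_of_decay {E : Type*} [SeminormedAddCommGroup E] {g : E → ℝ}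
    {C C₁ a b : ℝ} (hg0 : ∀ y, 0 ≤ g y) (hb : 0 ≤ b) (hba : b ≤ a)
    (hin : ∀ y, ‖y‖ ≤ 1 → g y ≤ C₁) (hout : ∀ y, 1 ≤ ‖y‖ → g y ≤ C * ‖y‖ ^ (-a)) :
    ∃ K, ∀ y, 0 < ‖y‖ → g y ≤ K * ‖y‖ ^ (-b) := by
  have hK : 0 ≤ max C C₁ := (hg0 0).trans ((hin 0 (by simp)).trans (le_max_right _ _))
  refine ⟨max C C₁, fun y hy => ?_⟩
  rcases le_total ‖y‖ 1 with h | h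
  · calc g y ≤ max C C₁ * 1 := ((hin y h).trans (le_max_right _ _)).trans_eq (mul_one _).symm
      _ ≤ max C C₁ * ‖y‖ ^ (-b) := mul_le_mul_of_nonneg_left
          (Real.one_le_rpow_of_pos_of_le_one_of_nonpos hy h (neg_nonpos.2 hb)) hK
  · calc g y ≤ max C C₁ * ‖y‖ ^ (-a) :=
          (hout y h).trans (mul_le_mul_of_nonneg_right (le_max_left _ _) (by positivity))
      _ ≤ max C C₁ * ‖y‖ ^ (-b) := mul_le_mul_of_nonneg_left
          (Real.rpow_le_rpow_of_exponent_le h (neg_le_neg hba)) hK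

theorem mul_sq_rescale_le {E : Type*} [NormedAddCommGroup E] [NormedSpace ℝ E] {g : E → ℝ}
    {K b w p r ε : ℝ} (hg0 : ∀ y, 0 ≤ g y) (hg : ∀ y, 0 < ‖y‖ → g y ≤ K * ‖y‖ ^ (-b))
    (hw : 0 ≤ w) (hε : 0 < ε) {x : E} (hx : 0 < ‖x‖) :
    w * ‖x‖ ^ r * (ε ^ (-(p / 2) - 1) * g (ε⁻¹ • x)) ^ 2
      ≤ K ^ 2 * ε ^ (2 * b - p - 2) * (w * ‖x‖ ^ (r - 2 * b)) := by
  have hnorm : ‖ε⁻¹ • x‖ = ε⁻¹ * ‖x‖ := by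
    rw [norm_smul, Real.norm_eq_abs, abs_of_pos (inv_pos.2 hε)]
  have hgx : g (ε⁻¹ • x) ≤ K * (ε ^ b * ‖x‖ ^ (-b)) := by
    have := hg _ (by rw [hnorm]; positivity)
    rwa [hnorm, Real.mul_rpow (by positivity) hx.le, Real.inv_rpow hε.le, ← Real.rpow_neg hε.le,
      neg_neg] at this
  have hsq : (ε ^ (-(p / 2) - 1) * g (ε⁻¹ • x)) ^ 2
      ≤ K ^ 2 * ε ^ (2 * b - p - 2) * ‖x‖ ^ (-(2 * b)) := by
    calc (ε ^ (-(p / 2) - 1) * g (ε⁻¹ • x)) ^ 2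
        ≤ (ε ^ (-(p / 2) - 1) * (K * (ε ^ b * ‖x‖ ^ (-b)))) ^ 2 :=
          pow_le_pow_left₀ (mul_nonneg (by positivity) (hg0 _))
            (mul_le_mul_of_nonneg_left hgx (by positivity)) 2
      _ = K ^ 2 * ((ε ^ (-(p / 2) - 1)) ^ 2 * (ε ^ b) ^ 2) * (‖x‖ ^ (-b)) ^ 2 := by ring
      _ = K ^ 2 * ε ^ (2 * b - p - 2) * ‖x‖ ^ (-(2 * b)) := by
          rw [← Real.rpow_mul_natCast hε.le, ← Real.rpow_mul_natCast hε.le,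
            ← Real.rpow_mul_natCast hx.le, ← Real.rpow_add hε]
          ring_nf
  calc w * ‖x‖ ^ r * (ε ^ (-(p / 2) - 1) * g (ε⁻¹ • x)) ^ 2
      ≤ w * ‖x‖ ^ r * (K ^ 2 * ε ^ (2 * b - p - 2) * ‖x‖ ^ (-(2 * b))) :=
        mul_le_mul_of_nonneg_left hsq (by positivity)
    _ = K ^ 2 * ε ^ (2 * b - p - 2) * (w * ‖x‖ ^ (r - 2 * b)) := by
        rw [sub_eq_add_neg r, Real.rpow_add hx]
        ring

theorem isLittleO_rpow_add_nhdsGT_zero (s : ℝ) {δ : ℝ} (hδ : 0 < δ) :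
    (fun ε : ℝ => ε ^ (s + δ)) =o[𝓝[>] 0] fun ε => ε ^ s := by
  have hδo : (fun ε : ℝ => ε ^ δ) =o[𝓝[>] 0] fun _ => (1 : ℝ) := by
    refine isLittleO_one_iff ℝ |>.2 ?_
    have := (Real.continuousAt_rpow_const 0 δ (Or.inr hδ.le)).tendsto
    rw [Real.zero_rpow hδ.ne'] at this
    exact this.mono_left nhdsWithin_le_nhds
  refine ((isBigO_refl (fun ε : ℝ => ε ^ s) _).mul_isLittleO hδo).congr' ?_ (by simp)
  filter_upwards [self_mem_nhdsWithin] with ε hε using (Real.rpow_add hε s δ).symm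

theorem isBigO_setIntegral_of_norm_le {α β E : Type*} [MeasurableSpace α] [NormedAddCommGroup E]
    [NormedSpace ℝ E] {μ : Measure α} {S : Set α} {l : Filter β} {f : β → α → E} {c : β → ℝ}
    {G : α → ℝ} (hS : MeasurableSet S) (hG : IntegrableOn G S μ)
    (h : ∀ᶠ ε in l, ∀ x ∈ S, ‖f ε x‖ ≤ ‖c ε‖ * G x) :
    (fun ε => ∫ x in S, f ε x ∂μ) =O[l] c := by
  refine IsBigO.of_bound (∫ x in S, G x ∂μ) ?_
  filter_upwards [h] with ε hε
  calc ‖∫ x in S, f ε x ∂μ‖ ≤ ∫ x in S, ‖c ε‖ * G x ∂μ :=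
        norm_integral_le_of_norm_le (hG.const_mul _) ((ae_restrict_iff' hS).2 (.of_forall hε))
    _ = (∫ x in S, G x ∂μ) * ‖c ε‖ := by rw [integral_const_mul, mul_comm]

theorem stmt_19 (n m : ℕ) (γ : ℝ) (hγ : γ ∈ Set.Ioo (0:ℝ) 1)
    (hn : (m:ℝ) + 2*γ < (n:ℝ)) (η : ℝ)
    (W : EuclideanSpace ℝ (Fin (n+1)) → ℝ) (C : ℝ)
    (hdecay : ∀ x : EuclideanSpace ℝ (Fin (n+1)), 1 ≤ ‖x‖ →
      ‖fderiv ℝ W x‖ ≤ C * ‖x‖ ^ (-((n:ℝ) - 2*γ + 1)))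
    (hbdd : ∀ R : ℝ, ∃ C' : ℝ, ∀ x : EuclideanSpace ℝ (Fin (n+1)), ‖x‖ ≤ R →
      ‖fderiv ℝ W x‖ ≤ C') :
    (fun ε : ℝ =>
        ∫ x in {x : EuclideanSpace ℝ (Fin (n+1)) | 0 < x (Fin.last n)} ∩ Metric.ball 0 η,
          (x (Fin.last n)) ^ (1 - 2*γ) * ‖x‖ ^ ((m:ℝ) + 1) *
            (ε ^ (-(((n:ℝ) - 2*γ)/2) - 1) * ‖fderiv ℝ W (ε⁻¹ • x)‖)^2)
      =o[nhdsWithin 0 (Set.Ioi 0)] fun ε : ℝ => ε ^ m := by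
  obtain ⟨hγ0, hγ1⟩ := hγ
  obtain ⟨δ, hδ0, hδ⟩ : ∃ δ : ℝ, 0 < δ ∧ δ < min 1 (n - 2 * γ - m) :=
    exists_between (lt_min one_pos (by linarith))
  rw [lt_min_iff] at hδ
  set b : ℝ := (m + δ + (n - 2 * γ) + 2) / 2 with hb
  have hm0 : (0 : ℝ) ≤ m := m.cast_nonneg
  obtain ⟨C₁, hC₁⟩ := hbdd 1
  obtain ⟨K, hgrad⟩ := exists_le_mul_norm_rpow_neg_of_decay (g := fun y => ‖fderiv ℝ W y‖)
    (fun _ => norm_nonneg _) (b := b) (by linarith) (by linarith) hC₁ hdecay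
  set S := {x : EuclideanSpace ℝ (Fin (n+1)) | 0 < x (Fin.last n)} ∩ Metric.ball 0 η
  set G := fun x : EuclideanSpace ℝ (Fin (n+1)) =>
    x (Fin.last n) ^ (1 - 2 * γ) * ‖x‖ ^ ((m : ℝ) + 1 - 2 * b)
  have hn0 : 0 < n := by exact_mod_cast (show (0 : ℝ) < n by linarith)
  have hG : IntegrableOn G S :=
    integrableOn_coord_rpow_mul_norm_rpow (by simpa using hn0) _ (by linarith) (by linarith)
      (by simp; linarith) η
  have hS : MeasurableSet S :=
    (measurableSet_lt measurable_const (by fun_prop)).inter measurableSet_ball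
  refine (isBigO_setIntegral_of_norm_le hS (hG.const_mul (K ^ 2)) ?_).trans_isLittleO
    (by simpa only [Real.rpow_natCast] using isLittleO_rpow_add_nhdsGT_zero (m : ℝ) hδ0)
  filter_upwards [self_mem_nhdsWithin] with ε (hε : 0 < ε) x hx
  have hxl : 0 ≤ x (Fin.last n) ^ (1 - 2 * γ) := Real.rpow_nonneg hx.1.le _
  have hx0 : 0 < ‖x‖ := hx.1.trans_le ((le_abs_self _).trans (PiLp.norm_apply_le x _))
  rw [Real.norm_of_nonneg (by positivity), Real.norm_of_nonneg (by positivity)]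
  have hεb : 2 * b - (n - 2 * γ) - 2 = m + δ := by rw [hb]; ring
  calc _ ≤ K ^ 2 * ε ^ (2 * b - (n - 2 * γ) - 2) * G x :=
        mul_sq_rescale_le (fun y => norm_nonneg (fderiv ℝ W y)) hgrad hxl hε hx0
    _ = _ := by rw [hεb]; ring
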